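/- arXiv:1804.09559 — 3 statements merged into one kernel-verified Lean document; each statement's English description precedes it below -/
import Mathlib

section
/- Let E = ℝⁿ, x ∈ E, g : E → E and hᵢ : E → E (i = 1, …, M) vector fields differentiable at x, ρ ∈ E, ℓ' ∈ E, Ω : E →L[ℝ] E a continuous linear map, and u ∈ ℝᴹ. Define the vector fields F₁ = g and F₂ : y ↦ g(y) + Σᵢ uᵢ hᵢ(y), and the Lie bracket [f₁, f₂](x) = Df₂(x)(f₁(x)) − Df₁(x)(f₂(x)). Then ⟪F₂(x) − F₁(x), Ω(F₂(x) − F₁(x))⟫ + ⟪ρ, DF₂(x)(F₂(x)) + DF₁(x)(F₁(x)) − 2 DF₁(x)(F₂(x))⟫ − ⟪ℓ', F₂(x) − F₁(x)⟫ = Σᵢ Σⱼ uᵢ uⱼ ⟪hᵢ(x), Ω(hⱼ(x))⟫ + ⟪ρ, Σ_{i=2}^{M} Σ_{j=1}^{i−1} uᵢ uⱼ [hᵢ, hⱼ](x) + 2 Σ_{i=2}^{M} Σ_{j=1}^{i−1} uᵢ uⱼ Dhᵢ(x)(hⱼ(x)) + Σᵢ uᵢ² Dhᵢ(x)(hᵢ(x))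 + Σᵢ uᵢ [g, hᵢ](x)⟫ − ⟪ℓ', Σᵢ uᵢ hᵢ(x)⟫. -/
open scoped RealInnerProductSpace

/-- The Lie bracket of two vector fields at a point:
`[f₁, f₂](x) = Df₂(x)(f₁(x)) − Df₁(x)(f₂(x))`. -/
noncomputable def lieBracket {n : ℕ} (f₁ f₂ : EuclideanSpace ℝ (Fin n) → EuclideanSpace ℝ (Fin n))
    (x : EuclideanSpace ℝ (Fin n)) : EuclideanSpace ℝ (Fin n) :=
  fderiv ℝ f₂ x (f₁ x) - fderiv ℝ f₁ x (f₂ x)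

/-!
Write `G = Dg(x)`, `S = Σ uᵢ Dhᵢ(x)` and `w = Σ uᵢ hᵢ(x)`, so that `F₂ − F₁ = w` and
`DF₂ = G + S`. The `ρ`-term on the left is then `S w + (S g(x) − G w)`, and the second summand
is `Σ uᵢ [g, hᵢ](x)`. The double sum `S w = Σᵢ Σⱼ uᵢ uⱼ Dhᵢ(x) hⱼ(x)` is split into its
diagonal and the pairs `(i, j)`, `(j, i)` with `j < i`, and each pair is rewritten with
`Dhⱼ(x) hᵢ(x) = Dhᵢ(x) hⱼ(x) + [hᵢ, hⱼ](x)`.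
-/

open Finset

section

variable {ι : Type*} [Fintype ι]

theorem Finset.sum_sum_eq_sum_sum_lt_add_sum_diag [LinearOrder ι] {β : Type*} [AddCommMonoid β]
    (b : ι → ι → β) :
    ∑ i, ∑ j, b i j = ∑ i, ∑ j ∈ univ.filter (· < i), (b i j + b j i) + ∑ i, b i i := by
  have split : ∀ i j, b i j =
      ((if j < i then b i j else 0) + if i < j then b i j else 0) +
        if i = j then b i j else 0 := by
    intro i j
    rcases lt_trichotomy i j with hij | rfl | hji
    · simp [hij, hij.ne, hij.not_gt]
    · simp
    · simp [hji, hji.ne', hji.not_gt]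
  conv_lhs => enter [2, i, 2, j]; rw [split i j]
  simp only [sum_add_distrib, sum_ite_eq, mem_univ, if_true]
  simp only [← sum_filter]
  congr 2
  exact sum_comm' (by simp)

variable {𝕜 E F : Type*} [NontriviallyNormedField 𝕜] [NormedAddCommGroup E] [NormedSpace 𝕜 E]
  [NormedAddCommGroup F] [NormedSpace 𝕜 F]

theorem ContinuousLinearMap.sum_smul_apply_sum_smul [LinearOrder ι] (u : ι → 𝕜)
    (D : ι → E →L[𝕜] F) (v : ι → E) :
    (∑ i, u i • D i) (∑ j, u j • v j) =
      ∑ i, ∑ j ∈ univ.filter (· < i), (u i * u j) • (D i (v j) + D j (v i)) +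
        ∑ i, u i ^ 2 • D i (v i) := by
  simp only [_root_.sum_apply, _root_.smul_apply, map_sum, map_smul, smul_sum, smul_smul]
  rw [sum_comm, sum_sum_eq_sum_sum_lt_add_sum_diag]
  simp only [smul_add, sq, mul_comm]

theorem fderiv_add_sum_smul {g : E → F} {h : ι → E → F} {x : E} (hg : DifferentiableAt 𝕜 g x)
    (hh : ∀ i, DifferentiableAt 𝕜 (h i) x) (u : ι → 𝕜) :
    fderiv 𝕜 (fun y => g y + ∑ i, u i • h i y) x =
      fderiv 𝕜 g x + ∑ i, u i • fderiv 𝕜 (h i) x :=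
  (hg.hasFDerivAt.add (HasFDerivAt.fun_sum fun i _ => (hh i).hasFDerivAt.const_smul (u i))).fderiv

end

theorem inner_sum_smul_map_sum_smul {E ι : Type*} [NormedAddCommGroup E] [InnerProductSpace ℝ E]
    (s : Finset ι) (u : ι → ℝ) (v : ι → E) (Ω : E →L[ℝ] E) :
    ⟪∑ i ∈ s, u i • v i, Ω (∑ j ∈ s, u j • v j)⟫ =
      ∑ i ∈ s, ∑ j ∈ s, (u i * u j) * ⟪v i, Ω (v j)⟫ := by
  simp_rw [map_sum, map_smul, sum_inner, inner_sum, real_inner_smul_left, real_inner_smul_right,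
    mul_assoc]

theorem stmt_6_general (n M : ℕ)
    (x : EuclideanSpace ℝ (Fin n))
    (g : EuclideanSpace ℝ (Fin n) → EuclideanSpace ℝ (Fin n))
    (h : Fin M → EuclideanSpace ℝ (Fin n) → EuclideanSpace ℝ (Fin n))
    (hg : DifferentiableAt ℝ g x)
    (hh : ∀ i, DifferentiableAt ℝ (h i) x)
    (ρ ℓ' : EuclideanSpace ℝ (Fin n))
    (Ω : EuclideanSpace ℝ (Fin n) →L[ℝ] EuclideanSpace ℝ (Fin n))
    (u : Fin M → ℝ)
    (F₁ F₂ : EuclideanSpace ℝ (Fin n) → EuclideanSpace ℝ (Fin n))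
    (hF₁ : F₁ = g)
    (hF₂ : F₂ = fun y => g y + ∑ i : Fin M, u i • h i y) :
    ⟪F₂ x - F₁ x, Ω (F₂ x - F₁ x)⟫ +
      ⟪ρ, fderiv ℝ F₂ x (F₂ x) + fderiv ℝ F₁ x (F₁ x) - (2 : ℝ) • fderiv ℝ F₁ x (F₂ x)⟫ -
      ⟪ℓ', F₂ x - F₁ x⟫ =
    (∑ i : Fin M, ∑ j : Fin M, (u i * u j) * ⟪h i x, Ω (h j x)⟫) +
      ⟪ρ, (∑ i : Fin M, ∑ j ∈ Finset.univ.filter (fun j => j < i),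
            (u i * u j) • lieBracket (h i) (h j) x) +
          (2 : ℝ) • (∑ i : Fin M, ∑ j ∈ Finset.univ.filter (fun j => j < i),
            (u i * u j) • fderiv ℝ (h i) x (h j x)) +
          (∑ i : Fin M, (u i ^ 2) • fderiv ℝ (h i) x (h i x)) +
          ∑ i : Fin M, u i • lieBracket g (h i) x⟫ -
      ⟪ℓ', ∑ i : Fin M, u i • h i x⟫ := by
  subst F₁ F₂
  set G := fderiv ℝ g x
  set S := ∑ i, u i • fderiv ℝ (h i) x
  set w := ∑ i, u i • h i x
  have hw : g x + w - g x = w := add_sub_cancel_left _ _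
  have hρ :
      (G + S) (g x + w) + G (g x) - (2 : ℝ) • G (g x + w) = S w + (S (g x) - G w) := by
    simp only [add_apply, map_add, two_smul]
    abel
  have hpair : ∀ i j, fderiv ℝ (h i) x (h j x) + fderiv ℝ (h j) x (h i x) =
      lieBracket (h i) (h j) x + (2 : ℝ) • fderiv ℝ (h i) x (h j x) := by
    intro i j
    rw [lieBracket, two_smul]
    abel
  have hcontrol : S w = (∑ i : Fin M, ∑ j ∈ Finset.univ.filter (fun j => j < i),
            (u i * u j) • lieBracket (h i) (h j) x) +
          (2 : ℝ) • (∑ i : Fin M, ∑ j ∈ Finset.univ.filter (fun j => j < i),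
            (u i * u j) • fderiv ℝ (h i) x (h j x)) +
          (∑ i : Fin M, (u i ^ 2) • fderiv ℝ (h i) x (h i x)) := by
    simp only [S, w, ContinuousLinearMap.sum_smul_apply_sum_smul, hpair, smul_add,
      sum_add_distrib, smul_sum, smul_comm (2 : ℝ)]
  have hdrift : ∑ i, u i • lieBracket g (h i) x = S (g x) - G w := by
    simp only [lieBracket, G, S, w, smul_sub, sum_sub_distrib, map_sum, map_smul,
      _root_.sum_apply, smul_apply]
  rw [fderiv_add_sum_smul hg hh, hw, hρ, inner_sum_smul_map_sum_smul, hcontrol, hdrift]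

theorem stmt_6 (n M : ℕ) (hn : 0 < n) (hM : 0 < M)
    (x : EuclideanSpace ℝ (Fin n))
    (g : EuclideanSpace ℝ (Fin n) → EuclideanSpace ℝ (Fin n))
    (h : Fin M → EuclideanSpace ℝ (Fin n) → EuclideanSpace ℝ (Fin n))
    (hg : DifferentiableAt ℝ g x)
    (hh : ∀ i, DifferentiableAt ℝ (h i) x)
    (ρ ℓ' : EuclideanSpace ℝ (Fin n))
    (Ω : EuclideanSpace ℝ (Fin n) →L[ℝ] EuclideanSpace ℝ (Fin n))
    (u : Fin M → ℝ)
    (F₁ F₂ : EuclideanSpace ℝ (Fin n) → EuclideanSpace ℝ (Fin n))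
    (hF₁ : F₁ = g)
    (hF₂ : F₂ = fun y => g y + ∑ i : Fin M, u i • h i y) :
    ⟪F₂ x - F₁ x, Ω (F₂ x - F₁ x)⟫ +
      ⟪ρ, fderiv ℝ F₂ x (F₂ x) + fderiv ℝ F₁ x (F₁ x) - (2 : ℝ) • fderiv ℝ F₁ x (F₂ x)⟫ -
      ⟪ℓ', F₂ x - F₁ x⟫ =
    (∑ i : Fin M, ∑ j : Fin M, (u i * u j) * ⟪h i x, Ω (h j x)⟫) +
      ⟪ρ, (∑ i : Fin M, ∑ j ∈ Finset.univ.filter (fun j => j < i),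
            (u i * u j) • lieBracket (h i) (h j) x) +
          (2 : ℝ) • (∑ i : Fin M, ∑ j ∈ Finset.univ.filter (fun j => j < i),
            (u i * u j) • fderiv ℝ (h i) x (h j x)) +
          (∑ i : Fin M, (u i ^ 2) • fderiv ℝ (h i) x (h i x)) +
          ∑ i : Fin M, u i • lieBracket g (h i) x⟫ -
      ⟪ℓ', ∑ i : Fin M, u i • h i x⟫ :=
  stmt_6_general n M x g h hg hh ρ ℓ' Ω u F₁ F₂ hF₁ hF₂
end

section
/- Let E = ℝⁿ, x ∈ E, hᵢ : E → E (i = 1, …, M) vector fields differentiable at x, ρ ∈ E, Ω : E →L[ℝ] E, and fix k ∈ {1, …, M}. Define the Lie bracket [f₁, f₂](x) = Df₂(x)(f₁(x)) − Df₁(x)(f₂(x)), and define the symmetric M × M matrix 𝒢 by 𝒢_{ik} = 𝒢_{ki} = ½⟪ρ, [hᵢ, h_k](x)⟫ for i ≠ k, 𝒢_{kk} = ⟪h_k(x), Ω(h_k(x))⟫ + ⟪ρ, Dh_k(x)(h_k(x))⟫, and 𝒢_{ij} = 0 for i, j ≠ k. If there exists i ≠ k with ⟪ρ, [hᵢ,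 h_k](x)⟫ ≠ 0, then for every c ∈ ℝ there exists u ∈ ℝᴹ such that uᵀ 𝒢 u + u_k · c < 0. -/
/-! Along `u = s • eᵢ + e_k` with `G i i = 0`, the form `u ⬝ᵥ G *ᵥ u` is affine in `s` with
slope `G i k + G k i`, which for the matrix `𝒢` is the bracket term `⟪ρ, [hᵢ, h_k](x)⟫ ≠ 0`. Since
`u k = 1`, the expression `u ⬝ᵥ G *ᵥ u + u k * c` then takes every real value, negative ones
included. -/

open Matrix
open scoped RealInnerProductSpace

namespace Matrix

variable {ι R : Type*} [Fintype ι] [DecidableEq ι]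

theorem single_add_single_dotProduct_mulVec [CommRing R] (G : Matrix ι ι R) (i k : ι) (s t : R) :
    (Pi.single i s + Pi.single k t) ⬝ᵥ G *ᵥ (Pi.single i s + Pi.single k t) =
      s * s * G i i + s * t * (G i k + G k i) + t * t * G k k := by
  simp only [mulVec_add, dotProduct_add, add_dotProduct, mulVec_single, single_dotProduct,
    Pi.smul_apply, col_apply, op_smul_eq_mul]
  ring

theorem exists_dotProduct_mulVec_add_lt_zero [Field R] [LinearOrder R] [IsStrictOrderedRing R]
    (G : Matrix ι ι R) {i k : ι} (hik : i ≠ k) (hii : G i i = 0) (hcouple : G i k + G k i ≠ 0)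
    (c : R) : ∃ u : ι → R, u ⬝ᵥ G *ᵥ u + u k * c < 0 := by
  set s := -(G k k + c + 1) / (G i k + G k i)
  refine ⟨Pi.single i s + Pi.single k 1, ?_⟩
  have hslope : s * (G i k + G k i) = -(G k k + c + 1) := div_mul_cancel₀ _ hcouple
  rw [single_add_single_dotProduct_mulVec, hii, Pi.add_apply, Pi.single_eq_of_ne hik.symm,
    Pi.single_eq_same]
  linear_combination hslope

end Matrix

theorem stmt_10_general (n M : ℕ)
    (x : EuclideanSpace ℝ (Fin n))
    (h : Fin M → EuclideanSpace ℝ (Fin n) → EuclideanSpace ℝ (Fin n))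
    (ρ : EuclideanSpace ℝ (Fin n))
    (k : Fin M)
    (G : Matrix (Fin M) (Fin M) ℝ)
    (hGik : ∀ i, i ≠ k → G i k = (1 / 2) * ⟪ρ, lieBracket (h i) (h k) x⟫)
    (hGki : ∀ i, i ≠ k → G k i = (1 / 2) * ⟪ρ, lieBracket (h i) (h k) x⟫)
    (hGzero : ∀ i j, i ≠ k → j ≠ k → G i j = 0)
    (hbracket : ∃ i, i ≠ k ∧ ⟪ρ, lieBracket (h i) (h k) x⟫ ≠ 0) :
    ∀ c : ℝ, ∃ u : Fin M → ℝ, u ⬝ᵥ G.mulVec u + u k * c < 0 := by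
  obtain ⟨i, hik, hb⟩ := hbracket
  have hcouple : G i k + G k i ≠ 0 := by
    rw [hGik i hik, hGki i hik, ← add_mul, add_halves, one_mul]
    exact hb
  exact G.exists_dotProduct_mulVec_add_lt_zero hik (hGzero i i hik hik) hcouple

theorem stmt_10 (n M : ℕ) (hn : 0 < n) (hM : 0 < M)
    (x : EuclideanSpace ℝ (Fin n))
    (h : Fin M → EuclideanSpace ℝ (Fin n) → EuclideanSpace ℝ (Fin n))
    (hh : ∀ i, DifferentiableAt ℝ (h i) x)
    (ρ : EuclideanSpace ℝ (Fin n))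
    (Ω : EuclideanSpace ℝ (Fin n) →L[ℝ] EuclideanSpace ℝ (Fin n))
    (k : Fin M)
    (G : Matrix (Fin M) (Fin M) ℝ) (hGsymm : G.IsSymm)
    (hGik : ∀ i, i ≠ k → G i k = (1 / 2) * ⟪ρ, lieBracket (h i) (h k) x⟫)
    (hGki : ∀ i, i ≠ k → G k i = (1 / 2) * ⟪ρ, lieBracket (h i) (h k) x⟫)
    (hGkk : G k k = ⟪h k x, Ω (h k x)⟫ + ⟪ρ, fderiv ℝ (h k) x (h k x)⟫)
    (hGzero : ∀ i j, i ≠ k → j ≠ k → G i j = 0)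
    (hbracket : ∃ i, i ≠ k ∧ ⟪ρ, lieBracket (h i) (h k) x⟫ ≠ 0) :
    ∀ c : ℝ, ∃ u : Fin M → ℝ, u ⬝ᵥ G.mulVec u + u k * c < 0 :=
  stmt_10_general n M x h ρ k G hGik hGki hGzero hbracket
end

section
/- Let E = ℝⁿ, x ∈ E, hᵢ : E → E (i = 1, …, M) vector fields differentiable at x, k ∈ {1, …, M}, and let u, v ∈ ℝᴹ satisfy v_k = 0 and uⱼ = vⱼ for all j ≠ k. Define the Lie bracket [f₁, f₂](x) = Df₂(x)(f₁(x)) − Df₁(x)(f₂(x)). Then the following identity holds in ℝⁿ: (Σⱼ uⱼ Dhⱼ(x))(Σⱼ uⱼ hⱼ(x)) + (Σᵢ vᵢ Dhᵢ(x))(Σᵢ vᵢ hᵢ(x)) − 2(Σᵢ vᵢ Dhᵢ(x))(Σⱼ uⱼ hⱼ(x)) = u_k · Σ_{j ≠ k} uⱼ [hⱼ, h_k](x) + u_k² · Dh_k(x)(h_k(x)), where each Dhᵢ(x) denotes the Fréchet derivative of hᵢ at x applied as a linear map. -/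
/-!
Since `u = v + u_k e_k`, the operator `Σ uⱼ Dhⱼ(x)` is `L + u_k Dh_k(x)` and the vector `Σ uⱼ hⱼ(x)` is
`w + u_k h_k(x)`, where `L = Σ vᵢ Dhᵢ(x)` and `w = Σ vᵢ hᵢ(x)`. Expanding bilinearly, the terms `L w`
cancel and what is left is `u_k (Dh_k(x) w - L h_k(x)) + u_k² Dh_k(x) h_k(x)`; the bracket
`Dh_k(x) w - L h_k(x)` is `Σ vⱼ [hⱼ, h_k](x)`, in which the `j = k` term vanishes because `v_k = 0`.
-/

open Finset

section AgreeOffOne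

variable {ι R M : Type*} [Fintype ι] [DecidableEq ι] [Semiring R] [AddCommMonoid M] [Module R M]
  {u v : ι → R} {k : ι}

theorem sum_erase_smul_eq_sum_smul_of_eq_off (f : ι → M) (hvk : v k = 0)
    (huv : ∀ j, j ≠ k → u j = v j) :
    ∑ j ∈ univ.erase k, u j • f j = ∑ j, v j • f j := by
  calc ∑ j ∈ univ.erase k, u j • f j = ∑ j ∈ univ.erase k, v j • f j :=
        sum_congr rfl fun j hj => by rw [huv j (ne_of_mem_erase hj)]
    _ = ∑ j, v j • f j := sum_erase _ (by rw [hvk, zero_smul])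

theorem sum_smul_eq_sum_smul_add_smul_of_eq_off (f : ι → M) (hvk : v k = 0)
    (huv : ∀ j, j ≠ k → u j = v j) :
    ∑ j, u j • f j = ∑ j, v j • f j + u k • f k := by
  rw [← sum_erase_add _ _ (mem_univ k), sum_erase_smul_eq_sum_smul_of_eq_off f hvk huv]

end AgreeOffOne

theorem ContinuousLinearMap.add_smul_apply_add_smul_add_apply_sub_two_smul_apply
    {R E F : Type*} [CommRing R] [TopologicalSpace E] [AddCommGroup E] [Module R E]
    [TopologicalSpace F] [AddCommGroup F] [Module R F] [IsTopologicalAddGroup F]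
    [ContinuousConstSMul R F] (L D : E →L[R] F) (w a : E) (c : R) :
    (L + c • D) (w + c • a) + L w - (2 : R) • L (w + c • a) =
      c • (D w - L a) + c ^ 2 • D a := by
  simp only [add_apply, smul_apply, map_add, map_smul]
  module

theorem sum_smul_lieBracket {n : ℕ} {ι : Type*} (s : Finset ι) (v : ι → ℝ)
    (h : ι → EuclideanSpace ℝ (Fin n) → EuclideanSpace ℝ (Fin n))
    (g : EuclideanSpace ℝ (Fin n) → EuclideanSpace ℝ (Fin n)) (x : EuclideanSpace ℝ (Fin n)) :
    ∑ i ∈ s, v i • lieBracket (h i) g x =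
      fderiv ℝ g x (∑ i ∈ s, v i • h i x) - (∑ i ∈ s, v i • fderiv ℝ (h i) x) (g x) := by
  simp only [lieBracket, smul_sub, sum_sub_distrib, map_sum, map_smul,
    _root_.sum_apply, smul_apply]

theorem stmt_18_general (n M : ℕ)
    (x : EuclideanSpace ℝ (Fin n))
    (h : Fin M → EuclideanSpace ℝ (Fin n) → EuclideanSpace ℝ (Fin n))
    (k : Fin M) (u v : Fin M → ℝ)
    (hvk : v k = 0) (huv : ∀ j, j ≠ k → u j = v j) :
    (∑ j : Fin M, u j • fderiv ℝ (h j) x) (∑ j : Fin M, u j • h j x) +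
      (∑ i : Fin M, v i • fderiv ℝ (h i) x) (∑ i : Fin M, v i • h i x) -
      (2 : ℝ) • (∑ i : Fin M, v i • fderiv ℝ (h i) x) (∑ j : Fin M, u j • h j x) =
    u k • (∑ j ∈ Finset.univ.erase k, u j • lieBracket (h j) (h k) x) +
      (u k ^ 2) • fderiv ℝ (h k) x (h k x) := by
  rw [sum_smul_eq_sum_smul_add_smul_of_eq_off (fun j => fderiv ℝ (h j) x) hvk huv,
    sum_smul_eq_sum_smul_add_smul_of_eq_off (fun j => h j x) hvk huv,
    sum_erase_smul_eq_sum_smul_of_eq_off _ hvk huv, sum_smul_lieBracket]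
  exact ContinuousLinearMap.add_smul_apply_add_smul_add_apply_sub_two_smul_apply _ _ _ _ _

theorem stmt_18 (n M : ℕ) (hn : 0 < n) (hM : 0 < M)
    (x : EuclideanSpace ℝ (Fin n))
    (h : Fin M → EuclideanSpace ℝ (Fin n) → EuclideanSpace ℝ (Fin n))
    (hh : ∀ i, DifferentiableAt ℝ (h i) x)
    (k : Fin M) (u v : Fin M → ℝ)
    (hvk : v k = 0) (huv : ∀ j, j ≠ k → u j = v j) :
    (∑ j : Fin M, u j • fderiv ℝ (h j) x) (∑ j : Fin M, u j • h j x) +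
      (∑ i : Fin M, v i • fderiv ℝ (h i) x) (∑ i : Fin M, v i • h i x) -
      (2 : ℝ) • (∑ i : Fin M, v i • fderiv ℝ (h i) x) (∑ j : Fin M, u j • h j x) =
    u k • (∑ j ∈ Finset.univ.erase k, u j • lieBracket (h j) (h k) x) +
      (u k ^ 2) • fderiv ℝ (h k) x (h k x) :=
  stmt_18_general n M x h k u v hvk huv
end
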